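/- There is a bijection between Schröder paths $p$ from $(i,0)$ to $(0,j)$ with exactly $k$ diagonal steps and words in $\{A,B,C\}$ with $j-k$ letters $A$, $k$ letters $B$, and $i-k$ letters $C$; under this bijection the area satisfies $\mathcal{A}(p) = 2I(w(p)) + k^2$, where $I(w)$ is the number of inversions of $w$ in the order $A < B < C$ plus the number of pairs of (distinct positions of) equal letters $B$. -/

import Mathlib

/-- A step of a Schröder path: up `(0,1)`, left `(-1,0)`, or diagonal `(-1,1)`. -/
inductive SStep
  | up
  | left
  | diag
deriving DecidableEq

instance : Fintype SStep :=
  ⟨{SStep.up, SStep.left, SStep.diag}, by intro s; cases s <;> decide⟩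

/-- The result of taking a step from a given position. -/
def stepMove : ℤ × ℤ → SStep → ℤ × ℤ
  | (x, y), SStep.up => (x, y + 1)
  | (x, y), SStep.left => (x - 1, y)
  | (x, y), SStep.diag => (x - 1, y + 1)

/-- Endpoint of a walk starting at `p` and taking the steps in the list. -/
def endPos : ℤ × ℤ → List SStep → ℤ × ℤ
  | p, [] => p
  | p, s :: rest => endPos (stepMove p s) rest

/-- The area to the left of the path, `∑ (x_s + x_{s+1}) (y_{s+1} - y_s)`:
an up step from `(x,y)` contributes `2x`, a diagonal step `2x - 1`, a left step `0`. -/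
def areaOf : ℤ × ℤ → List SStep → ℤ
  | _, [] => 0
  | (x, y), SStep.up :: rest => 2 * x + areaOf (x, y + 1) rest
  | (x, y), SStep.left :: rest => areaOf (x - 1, y) rest
  | (x, y), SStep.diag :: rest => (2 * x - 1) + areaOf (x - 1, y + 1) rest

/-- All lists of steps of length `n`. -/
def allLists : ℕ → Finset (List SStep)
  | 0 => {[]}
  | n + 1 => Finset.univ.biUnion fun s : SStep => (allLists n).image fun l => s :: l

/-- The (finite) set of Schröder paths from `(i,0)` to `(0,j)`, encoded as their
lists of steps read from the starting point `(i,0)`. -/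
def pathFinset (i j : ℕ) : Finset (List SStep) :=
  ((Finset.range (i + j + 1)).biUnion allLists).filter
    fun p => endPos ((i : ℤ), 0) p = (0, (j : ℤ))

/-- Number of diagonal steps of a path. -/
def diagCount (p : List SStep) : ℕ := p.count SStep.diag

/-- The partition function `Z_{(i,0)→(0,j)} = ∑_p γ^{k(p)} q^{A(p)}` of weighted
Schröder paths from `(i,0)` to `(0,j)`. -/
def Zpf {R : Type*} [CommRing R] (γ q : R) (i j : ℕ) : R :=
  ∑ p ∈ pathFinset i j, γ ^ diagCount p * q ^ (areaOf ((i : ℤ), 0) p).toNat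
/-- All words of length `n` over the three-letter ordered alphabet `A < B < C`,
encoded as `Fin 3` with `A = 0`, `B = 1`, `C = 2`. -/
def allWords : ℕ → Finset (List (Fin 3))
  | 0 => {[]}
  | n + 1 => Finset.univ.biUnion fun s : Fin 3 => (allWords n).image fun l => s :: l

/-- The words with `a` letters `A`, `b` letters `B` and `c` letters `C`. -/
def wordsABC (a b c : ℕ) : Finset (List (Fin 3)) :=
  (allWords (a + b + c)).filter fun w =>
    w.count (0 : Fin 3) = a ∧ w.count (1 : Fin 3) = b ∧ w.count (2 : Fin 3) = c

/-- The number of inversions of a word: pairs of positions `s < t` with `w_s > w_t`. -/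
def inversions (w : List (Fin 3)) : ℕ :=
  (Finset.univ.filter fun p : Fin w.length × Fin w.length =>
    p.1 < p.2 ∧ w.get p.2 < w.get p.1).card

/-- The word of a Schröder path: reading the steps from the endpoint downwards
(the step list is stored from the starting point, so we reverse it), record
`A = 0` for each up step, `B = 1` for each diagonal step, `C = 2` for each left step. -/
def wordOf (p : List SStep) : List (Fin 3) :=
  p.reverse.map fun s =>
    match s with
    | SStep.up => (0 : Fin 3)
    | SStep.diag => 1
    | SStep.left => 2

/-! A path is recovered from its word by reversing it and relabelling the letters, and its
endpoints fix the number of steps of each kind, hence the letter counts. For the area one proves,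
by induction on the first step, that for a path from any point
`𝒜 = 2 I(w) + k² + 2 x_end (#up + #diag)`, with `x_end` the abscissa of the endpoint: adding a
first step appends its letter to the end of the word, creating one inversion with each earlier
letter larger than it, and this matches the strip of area the step sweeps out. -/

def letterEquiv : SStep ≃ Fin 3 where
  toFun
    | SStep.up => 0
    | SStep.diag => 1
    | SStep.left => 2
  invFun
    | 0 => SStep.up
    | 1 => SStep.diag
    | 2 => SStep.left
  left_inv s := by cases s <;> rfl
  right_inv c := by fin_cases c <;> rfl

@[simp] lemma letterEquiv_up : letterEquiv .up = 0 := rfl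

@[simp] lemma letterEquiv_diag : letterEquiv .diag = 1 := rfl

@[simp] lemma letterEquiv_left : letterEquiv .left = 2 := rfl

lemma wordOf_eq_reverse_map (p : List SStep) : wordOf p = (p.map letterEquiv).reverse := by
  rw [wordOf, List.map_reverse]
  rfl

def wordEquiv : List SStep ≃ List (Fin 3) where
  toFun := wordOf
  invFun w := (w.map letterEquiv.symm).reverse
  left_inv p := by simp [wordOf_eq_reverse_map, Function.comp_def]
  right_inv w := by simp [wordOf_eq_reverse_map, Function.comp_def]

lemma wordOf_wordEquiv_symm (w : List (Fin 3)) : wordOf (wordEquiv.symm w) = w :=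
  wordEquiv.apply_symm_apply w

lemma wordOf_cons (s : SStep) (p : List SStep) :
    wordOf (s :: p) = wordOf p ++ [letterEquiv s] := by
  simp [wordOf_eq_reverse_map]

lemma count_wordOf (p : List SStep) (s : SStep) :
    (wordOf p).count (letterEquiv s) = p.count s := by
  rw [wordOf_eq_reverse_map, List.count_reverse,
    List.count_map_of_injective _ _ letterEquiv.injective]

lemma count_wordEquiv_symm (w : List (Fin 3)) (s : SStep) :
    (wordEquiv.symm w).count s = w.count (letterEquiv s) := by
  rw [← count_wordOf, wordOf_wordEquiv_symm]

lemma List.sum_count_eq_length {α : Type*} [Fintype α] [DecidableEq α] (l : List α) :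
    ∑ a, l.count a = l.length := by
  simpa using Multiset.sum_count_eq_card (s := Finset.univ) (m := (l : Multiset α)) (by simp)

lemma mem_iff_length_eq_of_cons_recursion {α : Type*} [Fintype α] [DecidableEq α]
    (S : ℕ → Finset (List α)) (h_zero : S 0 = {[]})
    (h_succ : ∀ n, S (n + 1) = Finset.univ.biUnion fun a => (S n).image (a :: ·))
    {l : List α} {n : ℕ} : l ∈ S n ↔ l.length = n := by
  induction n generalizing l with
  | zero => simp [h_zero, List.length_eq_zero_iff]
  | succ n ih =>
    cases l with
    | nil => simp [h_succ]
    | cons a l => simp [h_succ, ih]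

lemma endPos_eq (p : List SStep) (x y : ℤ) :
    endPos (x, y) p = (x - (p.count SStep.left + p.count SStep.diag),
      y + (p.count SStep.up + p.count SStep.diag)) := by
  induction p generalizing x y with
  | nil => simp [endPos]
  | cons s p ih =>
    cases s <;> refine Prod.ext ?_ ?_ <;>
      simp only [endPos, stepMove, ih, List.count_cons_self, List.count_cons_of_ne, ne_eq,
        reduceCtorEq, not_false_eq_true, Nat.cast_add, Nat.cast_one] <;>
      ring

lemma sum_univ_sStep {M : Type*} [AddCommMonoid M] (f : SStep → M) :
    ∑ s, f s = f .up + f .left + f .diag := by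
  simp [Finset.univ, Fintype.elems, add_assoc]

lemma mem_pathFinset {i j : ℕ} {p : List SStep} :
    p ∈ pathFinset i j ↔
      p.count SStep.left + p.count SStep.diag = i ∧ p.count SStep.up + p.count SStep.diag = j := by
  have h_length := p.sum_count_eq_length
  rw [sum_univ_sStep] at h_length
  simp only [pathFinset, Finset.mem_filter, Finset.mem_biUnion, Finset.mem_range,
    mem_iff_length_eq_of_cons_recursion allLists rfl fun _ => rfl, exists_eq_right', endPos_eq,
    Prod.ext_iff]
  omega

lemma mem_wordsABC {a b c : ℕ} {w : List (Fin 3)} :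
    w ∈ wordsABC a b c ↔ w.count 0 = a ∧ w.count 1 = b ∧ w.count 2 = c := by
  have h_length := w.sum_count_eq_length
  rw [Fin.sum_univ_three] at h_length
  simp only [wordsABC, Finset.mem_filter,
    mem_iff_length_eq_of_cons_recursion allWords rfl fun _ => rfl]
  omega

lemma List.countP_eq_sum_get {α : Type*} (l : List α) (p : α → Bool) :
    l.countP p = ∑ t : Fin l.length, if p (l.get t) then 1 else 0 := by
  induction l with
  | nil => rfl
  | cons a l ih =>
    rw [List.countP_cons, ih, add_comm]
    exact (Fin.sum_univ_succ fun t : Fin (l.length + 1) => if p ((a :: l).get t) then 1 else 0).symm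

lemma inversions_eq_sum (w : List (Fin 3)) :
    inversions w = ∑ s : Fin w.length, ∑ t : Fin w.length,
      if s < t ∧ w.get t < w.get s then 1 else 0 := by
  rw [inversions, Finset.card_filter, Fintype.sum_prod_type]

lemma inversions_cons (c : Fin 3) (w : List (Fin 3)) :
    inversions (c :: w) = w.countP (· < c) + inversions w := by
  rw [inversions_eq_sum, inversions_eq_sum, List.countP_eq_sum_get]
  simp only [List.length_cons, Fin.sum_univ_succ (n := w.length)]
  simp [Fin.succ_pos, Fin.succ_lt_succ_iff]

lemma inversions_append_singleton (w : List (Fin 3)) (c : Fin 3) :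
    inversions (w ++ [c]) = inversions w + w.countP (c < ·) := by
  induction w with
  | nil => rfl
  | cons d w ih =>
    simp only [List.cons_append, inversions_cons, ih, List.countP_append, List.countP_cons,
      List.countP_nil]
    split_ifs <;> omega

lemma countP_zero_lt (w : List (Fin 3)) : w.countP (0 < ·) = w.count 1 + w.count 2 := by
  induction w with
  | nil => simp
  | cons c w ih => fin_cases c <;> simp [ih] <;> omega

lemma countP_one_lt (w : List (Fin 3)) : w.countP (1 < ·) = w.count 2 := by
  induction w with
  | nil => simp
  | cons c w ih => fin_cases c <;> simp [ih]

lemma countP_two_lt (w : List (Fin 3)) : w.countP (2 < ·) = 0 :=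
  List.countP_eq_zero.mpr fun c _ => by fin_cases c <;> decide

lemma areaOf_eq (p : List SStep) (x y : ℤ) :
    areaOf (x, y) p = 2 * (inversions (wordOf p) : ℤ) + (p.count SStep.diag : ℤ) ^ 2 +
      2 * (x - (p.count SStep.left + p.count SStep.diag)) *
        (p.count SStep.up + p.count SStep.diag) := by
  induction p generalizing x y with
  | nil => simp [areaOf, wordOf, show inversions [] = 0 from rfl]
  | cons s p ih =>
    have h_diag := count_wordOf p .diag
    have h_left := count_wordOf p .left
    simp only [letterEquiv_diag, letterEquiv_left] at h_diag h_left
    cases s <;>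
      simp only [areaOf, ih, wordOf_cons, inversions_append_singleton, List.count_cons,
        letterEquiv_up, letterEquiv_diag, letterEquiv_left, countP_zero_lt, countP_one_lt,
        countP_two_lt, h_diag, h_left, beq_iff_eq, reduceCtorEq, if_true, if_false] <;>
      push_cast <;> ring

/-- The map `p ↦ w(p)` is a bijection between Schröder paths from `(i,0)` to `(0,j)`
with exactly `k` diagonal steps and words with `j-k` letters `A`, `k` letters `B` and
`i-k` letters `C`; under this bijection the area satisfies `𝒜(p) = 2 I(w(p)) + k²`,
with `I` the inversion number. -/
theorem schroeder_path_word_bijection (i j k : ℕ) (hki : k ≤ i) (hkj : k ≤ j) :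
    ((pathFinset i j).filter fun p => diagCount p = k).image wordOf =
        wordsABC (j - k) k (i - k) ∧
      Set.InjOn wordOf (((pathFinset i j).filter fun p => diagCount p = k) : Set (List SStep)) ∧
      ∀ p ∈ (pathFinset i j).filter fun p => diagCount p = k,
        (areaOf ((i : ℤ), 0) p).toNat = 2 * inversions (wordOf p) + k ^ 2 := by
  refine ⟨?_, wordEquiv.injective.injOn, fun p hp => ?_⟩
  · ext w
    change w ∈ Finset.image wordEquiv _ ↔ _
    rw [← Equiv.coe_toEmbedding, ← Finset.map_eq_image, Finset.mem_map_equiv, Finset.mem_filter,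
      mem_pathFinset, mem_wordsABC, diagCount]
    simp only [count_wordEquiv_symm, letterEquiv_up, letterEquiv_diag, letterEquiv_left]
    omega
  · rw [Finset.mem_filter, mem_pathFinset, diagCount] at hp
    obtain ⟨⟨h_i, -⟩, rfl⟩ := hp
    have h_area : areaOf ((i : ℤ), 0) p =
        ((2 * inversions (wordOf p) + p.count SStep.diag ^ 2 : ℕ) : ℤ) := by
      rw [areaOf_eq, ← h_i]
      push_cast
      ring
    rw [h_area, Int.toNat_natCast]
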